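/- Let K ≥ 2, let α ∈ ℝ^K satisfy α_k > 1 for every k, set α₀ = ∑_{k=1}^K α_k, and let y ∈ {0,1}^K be one-hot. Then the supremum over all p in the interior of the probability simplex of the quantity α₀·log α₀ + ∑_{k=1}^K α_k·log(p_k/α_k) − ∑_{k=1}^K y_k·log p_k equals α₀·log α₀ − ∑_{k=1}^K α_k·log α_k + ∑_{k=1}^K (α_k − y_k)·log((α_k − y_k)/(α₀ − 1)), and this supremum is attained at p_k = (α_k − y_k)/(α₀ − 1). -/

import Mathlib

/-!
After expanding `log (p k / α k)`, the objective is a constant plus `∑ k, β k * log (p k)` with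
`β k = α k - y k`, which is positive since `y` is one-hot and `α k > 1`, and `∑ β = α₀ - 1`.
By Gibbs' inequality (`log x ≤ x - 1` applied termwise at `x = p k * (∑ β) / β k`) this weighted
log-likelihood is maximised over the simplex at `p = β / ∑ β`.
-/

open Real Finset

section Gibbs

variable {ι : Type*} [Fintype ι] {β p : ι → ℝ}

theorem mul_log_sub_mul_log_div_sum_le (hβ : ∀ k, 0 < β k) {k : ι} (hp : 0 < p k) :
    β k * log (p k) - β k * log (β k / ∑ j, β j) ≤ p k * (∑ j, β j) - β k := by
  set S := ∑ j, β j
  have hβk := hβ k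
  have hS : 0 < S := hβk.trans_le <|
    single_le_sum (fun j _ => (hβ j).le) (mem_univ k)
  calc β k * log (p k) - β k * log (β k / S)
      = β k * log (p k * S / β k) := by
        rw [log_div (by positivity) hβk.ne', log_mul hp.ne' hS.ne', log_div hβk.ne' hS.ne']
        ring
    _ ≤ β k * (p k * S / β k - 1) :=
        mul_le_mul_of_nonneg_left (log_le_sub_one_of_pos (by positivity)) hβk.le
    _ = p k * S - β k := by field_simp

theorem sum_mul_log_le_sum_mul_log_div_sum (hβ : ∀ k, 0 < β k) (hp : ∀ k, 0 < p k)
    (hp1 : ∑ k, p k ≤ 1) :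
    ∑ k, β k * log (p k) ≤ ∑ k, β k * log (β k / ∑ j, β j) := by
  have hS : 0 ≤ ∑ j, β j := sum_nonneg fun j _ => (hβ j).le
  rw [← sub_nonpos, ← sum_sub_distrib]
  calc ∑ k, (β k * log (p k) - β k * log (β k / ∑ j, β j))
      ≤ ∑ k, (p k * (∑ j, β j) - β k) :=
        sum_le_sum fun k _ => mul_log_sub_mul_log_div_sum_le hβ (hp k)
    _ = (∑ k, p k - 1) * ∑ j, β j := by rw [sum_sub_distrib, ← sum_mul]; ring
    _ ≤ 0 := mul_nonpos_of_nonpos_of_nonneg (by linarith) hS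

theorem isGreatest_add_sum_mul_log [Nonempty ι] (hβ : ∀ k, 0 < β k) (c : ℝ) :
    IsGreatest {v | ∃ p : ι → ℝ, (∀ k, 0 < p k) ∧ ∑ k, p k = 1 ∧ v = c + ∑ k, β k * log (p k)}
      (c + ∑ k, β k * log (β k / ∑ j, β j)) := by
  have hS : 0 < ∑ j, β j := sum_pos (fun j _ => hβ j) univ_nonempty
  refine ⟨⟨fun k => β k / ∑ j, β j, fun k => div_pos (hβ k) hS, ?_, rfl⟩, ?_⟩
  · rw [← sum_div, div_self hS.ne']
  · rintro v ⟨p, hp, hp1, rfl⟩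
    exact add_le_add_right (sum_mul_log_le_sum_mul_log_div_sum hβ hp hp1.le) c

end Gibbs

theorem add_sum_mul_log_div_sub_sum_mul_log {ι : Type*} [Fintype ι] {α p : ι → ℝ}
    (hα : ∀ k, α k ≠ 0) (hp : ∀ k, p k ≠ 0) (c : ℝ) (y : ι → ℝ) :
    c + ∑ k, α k * log (p k / α k) - ∑ k, y k * log (p k)
      = c - ∑ k, α k * log (α k) + ∑ k, (α k - y k) * log (p k) := by
  simp only [log_div (hp _) (hα _), mul_sub, sub_mul, sum_sub_distrib]
  ring

theorem dappr_surrogate_value_general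
    (K : ℕ) (α y : Fin K → ℝ)
    (hα : ∀ k, 1 < α k)
    (hy01 : ∀ k, y k = 0 ∨ y k = 1) (hysum : ∑ k, y k = 1) :
    sSup {v : ℝ | ∃ p : Fin K → ℝ, (∀ k, 0 < p k) ∧ (∑ k, p k = 1) ∧
        v = (∑ k, α k) * Real.log (∑ k, α k)
            + ∑ k, α k * Real.log (p k / α k)
            - ∑ k, y k * Real.log (p k)}
      = (∑ k, α k) * Real.log (∑ k, α k)
          - ∑ k, α k * Real.log (α k)
          + ∑ k, (α k - y k) * Real.log ((α k - y k) / ((∑ j, α j) - 1))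
    ∧ (∀ k, 0 < (α k - y k) / ((∑ j, α j) - 1))
    ∧ (∑ k, (α k - y k) / ((∑ j, α j) - 1) = 1)
    ∧ (∑ k, α k) * Real.log (∑ k, α k)
          + ∑ k, α k * Real.log ((α k - y k) / ((∑ j, α j) - 1) / α k)
          - ∑ k, y k * Real.log ((α k - y k) / ((∑ j, α j) - 1))
      = (∑ k, α k) * Real.log (∑ k, α k)
          - ∑ k, α k * Real.log (α k)
          + ∑ k, (α k - y k) * Real.log ((α k - y k) / ((∑ j, α j) - 1)) := by
  have : Nonempty (Fin K) := by
    by_contra h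
    simp [not_nonempty_iff.mp h] at hysum
  have hβ : ∀ k, 0 < α k - y k := fun k => by rcases hy01 k with h | h <;> linarith [hα k]
  have hβsum : ∑ k, (α k - y k) = ∑ j, α j - 1 := by rw [sum_sub_distrib, hysum]
  have hα0 : ∀ k, α k ≠ 0 := fun k => (zero_lt_one.trans (hα k)).ne'
  have hS : 0 < ∑ j, α j - 1 := hβsum ▸ sum_pos (fun k _ => hβ k) univ_nonempty
  have hmax := isGreatest_add_sum_mul_log hβ
    ((∑ k, α k) * log (∑ k, α k) - ∑ k, α k * log (α k))
  rw [hβsum] at hmax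
  have hp : ∀ k, 0 < (α k - y k) / (∑ j, α j - 1) := fun k => div_pos (hβ k) hS
  refine ⟨?_, hp, by rw [← sum_div, hβsum, div_self hS.ne'], ?_⟩
  · rw [← hmax.csSup_eq]
    congr 1
    ext v
    refine exists_congr fun p => and_congr_right fun hpos => and_congr_right fun _ => ?_
    rw [add_sum_mul_log_div_sub_sum_mul_log hα0 fun k => (hpos k).ne']
  · exact add_sum_mul_log_div_sub_sum_mul_log hα0 (fun k => (hp k).ne') _ y

/-- Closed-form value of the per-sample surrogate likelihood: the supremum over
the interior of the probability simplex of
`α₀·log α₀ + ∑ k, α k·log (p k / α k) - ∑ k, y k·log (p k)` equals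
`α₀·log α₀ - ∑ k, α k·log (α k) + ∑ k, (α k - y k)·log ((α k - y k)/(α₀ - 1))`,
and it is attained at `p k = (α k - y k) / (α₀ - 1)`. -/
theorem dappr_surrogate_value
    (K : ℕ) (hK : 2 ≤ K) (α y : Fin K → ℝ)
    (hα : ∀ k, 1 < α k)
    (hy01 : ∀ k, y k = 0 ∨ y k = 1) (hysum : ∑ k, y k = 1) :
    sSup {v : ℝ | ∃ p : Fin K → ℝ, (∀ k, 0 < p k) ∧ (∑ k, p k = 1) ∧
        v = (∑ k, α k) * Real.log (∑ k, α k)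
            + ∑ k, α k * Real.log (p k / α k)
            - ∑ k, y k * Real.log (p k)}
      = (∑ k, α k) * Real.log (∑ k, α k)
          - ∑ k, α k * Real.log (α k)
          + ∑ k, (α k - y k) * Real.log ((α k - y k) / ((∑ j, α j) - 1))
    ∧ (∀ k, 0 < (α k - y k) / ((∑ j, α j) - 1))
    ∧ (∑ k, (α k - y k) / ((∑ j, α j) - 1) = 1)
    ∧ (∑ k, α k) * Real.log (∑ k, α k)
          + ∑ k, α k * Real.log ((α k - y k) / ((∑ j, α j) - 1) / α k)
          - ∑ k, y k * Real.log ((α k - y k) / ((∑ j, α j) - 1))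
      = (∑ k, α k) * Real.log (∑ k, α k)
          - ∑ k, α k * Real.log (α k)
          + ∑ k, (α k - y k) * Real.log ((α k - y k) / ((∑ j, α j) - 1)) :=
  dappr_surrogate_value_general K α y hα hy01 hysum
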